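/- Fix φ_t ∈ ℝ and η ≠ 0, and let τ = φ_t + δ with δ strictly between 0 and η. Consider the one-dimensional questioner parameterization θ ↦ τ(θ) = θ (identity), J_t(θ) = -|σ(φ_t - θ) - 1/2|, J_{t+1}(θ) = -|σ(φ_t + η - θ) - 1/2|, and let g = J_t'(τ) ≠ 0. Then there exist c > 0 and α₀ > 0 such that for all 0 < α < α₀, J_{t+1}(τ + α g) - J_{t+1}(τ) ≤ -c α. -/

import Mathlib

/-!
`J_a(θ) = -|σ(a - θ) - 1/2|` has derivative `sign (a - τ) · σ'(a - τ)` at `τ ≠ a`. Since `τ` lies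
strictly between `φ_t` and `φ_t + η`, the signs for `a = φ_t` and `a = φ_t + η` are opposite, so
along the step `α g` the function `J_{t+1}` has directional derivative `g · J_{t+1}'(τ) < 0`, which
forces a decrease linear in `α` for small `α`.
-/

noncomputable def sigma (z : ℝ) : ℝ := 1 / (1 + Real.exp (-z))

open Real Filter Topology

theorem HasDerivAt.exists_sub_le_neg_mul_of_neg {f : ℝ → ℝ} {f' x : ℝ}
    (hf : HasDerivAt f f' x) (hf' : f' < 0) :
    ∃ c > 0, ∃ t₀ > 0, ∀ t : ℝ, 0 < t → t < t₀ → f (x + t) - f x ≤ -c * t := by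
  have hslope : ∀ᶠ t in 𝓝[>] 0, t⁻¹ • (f (x + t) - f x) < f' / 2 :=
    hf.tendsto_slope_zero_right.eventually (eventually_lt_nhds (by linarith))
  obtain ⟨t₀, ht₀, hlt⟩ := (nhdsGT_basis (0 : ℝ)).eventually_iff.mp hslope
  refine ⟨-f' / 2, by linarith, t₀, ht₀, fun t ht htt₀ => ?_⟩
  have := hlt ⟨ht, htt₀⟩
  rw [smul_eq_mul, inv_mul_lt_iff₀ ht] at this
  linarith

theorem HasDerivAt.exists_sub_le_neg_mul_of_mul_neg {F : ℝ → ℝ} {d τ g : ℝ}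
    (hF : HasDerivAt F d τ) (hgd : g * d < 0) :
    ∃ c > 0, ∃ α₀ > 0, ∀ α : ℝ, 0 < α → α < α₀ →
      F (τ + α * g) - F τ ≤ -c * α := by
  have hline : HasDerivAt (fun α => F (τ + α * g)) (d * g) 0 :=
    hF.comp_of_eq 0 ((hasDerivAt_mul_const g).const_add τ) (by simp)
  simpa using hline.exists_sub_le_neg_mul_of_neg (by linarith)

theorem sigma_eq_sigmoid : sigma = sigmoid :=
  funext fun _ => one_div _

theorem sign_sigmoid_sub_half (x : ℝ) : SignType.sign (sigmoid x - 1 / 2) = SignType.sign x := by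
  have hhalf : (1 / 2 : ℝ) = sigmoid 0 := by rw [sigmoid_zero]; norm_num
  rcases lt_trichotomy x 0 with hx | rfl | hx
  · rw [sign_neg hx, sign_neg (sub_neg.mpr (hhalf ▸ sigmoid_lt hx))]
  · rw [hhalf, sub_self]
  · rw [sign_pos hx, sign_pos (sub_pos.mpr (hhalf ▸ sigmoid_lt hx))]

theorem deriv_sigmoid_pos (x : ℝ) : 0 < deriv sigmoid x := by
  rw [deriv_sigmoid]
  exact mul_pos (sigmoid_pos x) (sub_pos.mpr (sigmoid_lt_one x))

theorem hasDerivAt_neg_abs_sigma_sub_half {a τ : ℝ} (hτ : a ≠ τ) :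
    HasDerivAt (fun θ => -|sigma (a - θ) - 1 / 2|)
      (SignType.sign (a - τ) * deriv sigmoid (a - τ)) τ := by
  have hsign := sign_sigmoid_sub_half (a - τ)
  have hne : sigmoid (a - τ) - 1 / 2 ≠ 0 := by
    rw [← sign_ne_zero, hsign, sign_ne_zero, sub_ne_zero]; exact hτ
  have hinner : HasDerivAt (fun θ => sigmoid (a - θ) - 1 / 2) (deriv sigmoid (a - τ) * -1) τ :=
    (differentiableAt_sigmoid.hasDerivAt.comp τ ((hasDerivAt_id τ).const_sub a)).sub_const _
  have habs := (hasDerivAt_abs hne).comp τ hinner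
  rw [hsign] at habs
  rw [sigma_eq_sigmoid]
  refine habs.neg.congr_deriv ?_
  ring

theorem sign_mul_deriv_sigmoid_mul_neg {x y : ℝ} (h : x * y < 0) :
    SignType.sign x * deriv sigmoid x * (SignType.sign y * deriv sigmoid y) < 0 := by
  have hsign : (SignType.sign x : ℝ) * SignType.sign y = -1 := by
    rw [← SignType.coe_mul, ← sign_mul, sign_neg h]
    rfl
  have hpos := mul_pos (deriv_sigmoid_pos x) (deriv_sigmoid_pos y)
  calc _ = (SignType.sign x * SignType.sign y : ℝ) * (deriv sigmoid x * deriv sigmoid y) := by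
        ring
    _ < 0 := by rw [hsign]; linarith

theorem stmt_19 (φt η δ : ℝ) (hη : η ≠ 0)
    (hδ : (0 < η → 0 < δ ∧ δ < η) ∧ (η < 0 → η < δ ∧ δ < 0)) :
    deriv (fun θ : ℝ => -|sigma (φt - θ) - 1/2|) (φt + δ) ≠ 0 ∧
    ∃ c > 0, ∃ α₀ > 0, ∀ α : ℝ, 0 < α → α < α₀ →
      (fun θ : ℝ => -|sigma (φt + η - θ) - 1/2|)
          ((φt + δ) + α * deriv (fun θ : ℝ => -|sigma (φt - θ) - 1/2|) (φt + δ)) -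
        (fun θ : ℝ => -|sigma (φt + η - θ) - 1/2|) (φt + δ) ≤ -c * α := by
  have hopposite : (φt - (φt + δ)) * (φt + η - (φt + δ)) < 0 := by
    rcases hη.lt_or_gt with hneg | hpos
    · obtain ⟨h₁, h₂⟩ := hδ.2 hneg; nlinarith
    · obtain ⟨h₁, h₂⟩ := hδ.1 hpos; nlinarith
  have hJt := hasDerivAt_neg_abs_sigma_sub_half (sub_ne_zero.mp (left_ne_zero_of_mul hopposite.ne))
  have hJt₁ :=
    hasDerivAt_neg_abs_sigma_sub_half (sub_ne_zero.mp (right_ne_zero_of_mul hopposite.ne))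
  have hdescent := sign_mul_deriv_sigmoid_mul_neg hopposite
  rw [hJt.deriv]
  exact ⟨left_ne_zero_of_mul hdescent.ne, hJt₁.exists_sub_le_neg_mul_of_mul_neg hdescent⟩
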